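/- arXiv:1710.05528 — 2 statements merged into one kernel-verified Lean document; each statement's English description precedes it below -/
import Mathlib

section
/- Let E ⊂ ℝ^{n+1} be an n-ADR set, u harmonic in Ω := ℝ^{n+1}\E, and let 𝒫 ⊂ 𝔻(E) be the collection of principal (stopping) cubes built from an exhausting increasing sequence ℐ and the stopping condition M_𝔻(N_*u)(Q') > 2M_𝔻(N_*u)(Q). Then 𝒫 satisfies a Carleson packing condition: for every Q₀ ∈ 𝔻(E), Σ_{P∈𝒫, P⊆Q₀} σ(P) ≲ σ(Q₀), with implicit constant depending only on the structural constants and the Carleson constant of ℐ. -/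
open MeasureTheory Metric Set
open scoped ENNReal NNReal

attribute [local instance] Classical.propDecidable

noncomputable section

/-- `ℝ^m` with the Euclidean metric. -/
abbrev Euc (m : ℕ) : Type := EuclideanSpace ℝ (Fin m)

/-! ### General dyadic systems in metric spaces (for the discrete Carleson embedding) -/

/-- A dyadic (Christ-type) system of cubes in a (quasi)metric space `X`. -/
structure MetricDyadic (X : Type) [PseudoMetricSpace X] [MeasurableSpace X] where
  ι : Type
  cube : ι → Set X
  gen : ι → ℤ
  cube_meas : ∀ Q, MeasurableSet (cube Q)
  nested : ∀ Q P, cube Q ⊆ cube P ∨ cube P ⊆ cube Q ∨ Disjoint (cube Q) (cube P)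
  covers : ∀ k : ℤ, ∀ x : X, ∃ Q, gen Q = k ∧ x ∈ cube Q
  disj_gen : ∀ Q P, gen Q = gen P → Q ≠ P → Disjoint (cube Q) (cube P)
  center : ι → X
  c1 : ℝ
  C1 : ℝ
  c1_pos : 0 < c1
  C1_ge : 1 ≤ C1
  ball_sub : ∀ Q, ball (center Q) (c1 * (2 : ℝ) ^ (-(gen Q))) ⊆ cube Q
  sub_ball : ∀ Q, cube Q ⊆ ball (center Q) (C1 * (2 : ℝ) ^ (-(gen Q)))

/-- The dyadic maximal function associated to a dyadic system. -/
def mDyad {X : Type} [PseudoMetricSpace X] [MeasurableSpace X] (D : MetricDyadic X)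
    (μ : Measure X) (f : X → ℝ) (x : X) : ℝ≥0∞ :=
  ⨆ Q ∈ {Q : D.ι | x ∈ D.cube Q},
    (μ (D.cube Q))⁻¹ * ∫⁻ y in D.cube Q, ENNReal.ofReal (f y) ∂μ

/-! ### ADR and UR sets -/

variable (n : ℕ) (E : Set (Euc (n + 1)))

/-- The surface measure `σ := H^n|_E`. -/
def sigmaE : Measure (Euc (n + 1)) :=
  (Measure.hausdorffMeasure (n : ℝ)).restrict E

/-- `E ⊆ ℝ^{n+1}` is an `n`-dimensional Ahlfors-David regular set with ADR constant `CA`. -/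
def IsADR (CA : ℝ) : Prop :=
  IsClosed E ∧ E.Nonempty ∧ 1 ≤ CA ∧
    ∀ x ∈ E, ∀ r : ℝ, 0 < r → ENNReal.ofReal r < EMetric.diam E →
      ENNReal.ofReal (r ^ n / CA) ≤ sigmaE n E (ball x r) ∧
        sigmaE n E (ball x r) ≤ ENNReal.ofReal (CA * r ^ n)

/-- `E ⊆ ℝ^{n+1}` is uniformly rectifiable (of codimension 1): it is `n`-ADR and contains
big pieces of Lipschitz images of `ℝ^n`. -/
def IsUR : Prop :=
  (∃ CA : ℝ, IsADR n E CA) ∧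
    ∃ θ Λ : ℝ, 0 < θ ∧ 0 < Λ ∧
      ∀ x ∈ E, ∀ r : ℝ, 0 < r → ENNReal.ofReal r < EMetric.diam E →
        ∃ ρ : Euc n → Euc (n + 1), LipschitzWith (Real.toNNReal Λ) ρ ∧
          ENNReal.ofReal (θ * r ^ n) ≤
            Measure.hausdorffMeasure (n : ℝ)
              (E ∩ ball x r ∩ (ρ '' {y : Euc n | ‖y‖ < r}))

/-! ### Harmonic functions, test vector fields and (local) bounded variation -/

/-- Divergence of a vector field on `ℝ^{n+1}`. -/
def divg (Ψ : Euc (n + 1) → Euc (n + 1)) (Y : Euc (n + 1)) : ℝ :=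
  ∑ i : Fin (n + 1), fderiv ℝ Ψ Y (EuclideanSpace.single i (1 : ℝ)) i

/-- `u` is harmonic on `Ω`: it is `C²` there and its Laplacian vanishes. -/
def HarmonicOnSet (u : Euc (n + 1) → ℝ) (Ω : Set (Euc (n + 1))) : Prop :=
  ContDiffOn ℝ 2 u Ω ∧
    ∀ x ∈ Ω,
      ∑ i : Fin (n + 1),
        fderiv ℝ (fun y => fderiv ℝ u y (EuclideanSpace.single i (1 : ℝ))) x
          (EuclideanSpace.single i (1 : ℝ)) = 0

/-- `Ψ ∈ C¹₀(U)` with `‖Ψ‖_∞ ≤ 1`. -/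
def TestOn (U : Set (Euc (n + 1))) (Ψ : Euc (n + 1) → Euc (n + 1)) : Prop :=
  ContDiff ℝ 1 Ψ ∧ HasCompactSupport Ψ ∧ tsupport Ψ ⊆ U ∧ ∀ Y, ‖Ψ Y‖ ≤ 1

/-- The total variation `∬_U |∇f|` of `f` over `U`, defined by duality. -/
def totalVar (f : Euc (n + 1) → ℝ) (U : Set (Euc (n + 1))) : ℝ≥0∞ :=
  ⨆ Ψ : {Ψ : Euc (n + 1) → Euc (n + 1) // TestOn n U Ψ},
    ENNReal.ofReal (∫ Y in U, f Y * divg n Ψ.1 Y)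

/-- `f ∈ BV_loc(Ω)`. -/
def BVloc (f : Euc (n + 1) → ℝ) (Ω : Set (Euc (n + 1))) : Prop :=
  LocallyIntegrableOn f Ω ∧
    ∀ U : Set (Euc (n + 1)), IsOpen U → Bornology.IsBounded U → closure U ⊆ Ω →
      totalVar n f U < ⊤

/-- The Carleson functional `𝒞(∇f)(x) = sup_{r>0} r^{-n} ∬_{B(x,r)\E} |∇f|`. -/
def carlGrad (f : Euc (n + 1) → ℝ) (x : Euc (n + 1)) : ℝ≥0∞ :=
  ⨆ r : {r : ℝ // 0 < r},
    (ENNReal.ofReal ((r : ℝ) ^ n))⁻¹ * totalVar n f (ball x (r : ℝ) \ E)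

/-! ### `L^p` norms of `ℝ≥0∞`-valued functions and operator norms -/

def lpNormE {X : Type} [MeasurableSpace X] (μ : Measure X) (p : ℝ) (g : X → ℝ≥0∞) : ℝ≥0∞ :=
  (∫⁻ x, g x ^ p ∂μ) ^ (1 / p)

def opNormE {X : Type} [MeasurableSpace X] (μ : Measure X) (p : ℝ)
    (T : (X → ℝ≥0∞) → X → ℝ≥0∞) : ℝ≥0∞ :=
  sInf {c : ℝ≥0∞ | ∀ g : X → ℝ≥0∞, lpNormE μ p (T g) ≤ c * lpNormE μ p g}

/-- The Hardy–Littlewood maximal operator over surface balls of `E`. -/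
def hlMax (g : Euc (n + 1) → ℝ≥0∞) (x : Euc (n + 1)) : ℝ≥0∞ :=
  ⨆ y ∈ E, ⨆ r : {r : ℝ // 0 < r ∧ dist x y < r},
    (sigmaE n E (ball y (r : ℝ)))⁻¹ * ∫⁻ z in ball y (r : ℝ), g z ∂(sigmaE n E)

/-! ### Christ–David dyadic cubes on `E` and the HMM Whitney regions -/

/-- A Christ–David system of dyadic cubes `𝔻(E)` on an ADR set `E`. -/
structure DyadicSystem where
  ι : Type
  cube : ι → Set (Euc (n + 1))
  cube_inj : Function.Injective cube
  cube_sub : ∀ Q, cube Q ⊆ E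
  cube_ne : ∀ Q, (cube Q).Nonempty
  cube_meas : ∀ Q, MeasurableSet (cube Q)
  len : ι → ℝ
  len_dyadic : ∀ Q, ∃ k : ℤ, len Q = (2 : ℝ) ^ (-k)
  center : ι → Euc (n + 1)
  center_mem : ∀ Q, center Q ∈ cube Q
  c1 : ℝ
  C1 : ℝ
  c1_pos : 0 < c1
  C1_ge : 1 ≤ C1
  ball_sub : ∀ Q, E ∩ ball (center Q) (c1 * len Q) ⊆ cube Q
  sub_ball : ∀ Q, cube Q ⊆ ball (center Q) (C1 * len Q)
  nested : ∀ Q P, cube Q ⊆ cube P ∨ cube P ⊆ cube Q ∨ Disjoint (cube Q) (cube P)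
  mono_len : ∀ Q P, cube Q ⊆ cube P → len Q ≤ len P
  parent : ι → ι
  parent_sub : ∀ Q, cube Q ⊆ cube (parent Q)
  parent_len : ∀ Q, len (parent Q) = 2 * len Q ∨ (cube Q = E ∧ parent Q = Q)
  exists_small : ∀ x ∈ E, ∀ r : ℝ, 0 < r → ∃ Q, x ∈ cube Q ∧ len Q ≤ r
  exists_large : ∀ x ∈ E, ∀ r : ℝ, 0 < r → ENNReal.ofReal r ≤ EMetric.diam E →
      ∃ Q, x ∈ cube Q ∧ r ≤ C1 * len Q

/-- The Christ–David cubes of `E` together with the Whitney regions `U_Q`, the fattened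
Whitney regions `Û**_Q` used to build cones, and their connected components, as constructed
by Hofmann–Martell–Mayboroda. -/
structure WhitneySetup extends DyadicSystem n E where
  U : ι → Set (Euc (n + 1))
  U_open : ∀ Q, IsOpen (U Q)
  U_sub : ∀ Q, U Q ⊆ Eᶜ
  Ufat : ι → Set (Euc (n + 1))
  Ufat_open : ∀ Q, IsOpen (Ufat Q)
  Ufat_sub : ∀ Q, Ufat Q ⊆ Eᶜ
  U_sub_fat : ∀ Q, U Q ⊆ Ufat Q
  cw : ℝ
  cw_ge : 1 ≤ cw
  fat_dist_le : ∀ Q, ∀ Y ∈ Ufat Q, infDist Y E ≤ cw * len Q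
  fat_len_le : ∀ Q, ∀ Y ∈ Ufat Q, len Q ≤ cw * infDist Y E
  fat_near : ∀ Q, ∀ Y ∈ Ufat Q, infDist Y (cube Q) ≤ cw * len Q
  ncomp : ι → ℕ
  ncomp_pos : ∀ Q, 0 < ncomp Q
  ncomp_bdd : ∃ N : ℕ, ∀ Q, ncomp Q ≤ N
  comp : ι → ℕ → Set (Euc (n + 1))
  comp_union : ∀ Q, U Q = ⋃ i ∈ Finset.range (ncomp Q), comp Q i
  comp_empty : ∀ Q, ∀ i, ncomp Q ≤ i → comp Q i = ∅
  comp_disj : ∀ Q, ∀ i j, i ≠ j → Disjoint (comp Q i) (comp Q j)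
  comp_open : ∀ Q, ∀ i, IsOpen (comp Q i)
  comp_conn : ∀ Q, ∀ i, i < ncomp Q → IsConnected (comp Q i)
  vol_comp : ∀ Q, ∀ i j, i < ncomp Q → j < ncomp Q →
      volume (comp Q i) ≤ ENNReal.ofReal cw * volume (comp Q j)
  vol_U : ∀ Q, ENNReal.ofReal (len Q ^ (n + 1) / cw) ≤ volume (U Q) ∧
      volume (U Q) ≤ ENNReal.ofReal (cw * len Q ^ (n + 1))
  z0 : Euc (n + 1)
  z0_mem : z0 ∈ E
  lam0 : ℕ

/-! ### Cones, non-tangential maximal functions, dyadic maximal functions -/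

/-- The cone `Γ(x) := ⋃_{Q ∋ x} Û**_Q`. -/
def coneW (W : WhitneySetup n E) (x : Euc (n + 1)) : Set (Euc (n + 1)) :=
  ⋃ Q ∈ {Q : W.ι | x ∈ W.cube Q}, W.Ufat Q

/-- The non-tangential maximal function `N_* u`. -/
def ntMax (W : WhitneySetup n E) (u : Euc (n + 1) → ℝ) (x : Euc (n + 1)) : ℝ≥0∞ :=
  ⨆ Y ∈ coneW n E W x, ENNReal.ofReal |u Y|

/-- The cone of aperture `α`:
`Γ_α(x) := ⋃_{Q ∋ x} ⋃_{P : ℓ(P) = ℓ(Q), αΔ_Q ∩ P ≠ ∅} Û**_P`. -/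
def coneA (W : WhitneySetup n E) (α : ℝ) (x : Euc (n + 1)) : Set (Euc (n + 1)) :=
  ⋃ Q ∈ {Q : W.ι | x ∈ W.cube Q},
    ⋃ P ∈ {P : W.ι | W.len P = W.len Q ∧
        (E ∩ ball (W.center Q) (α * W.C1 * W.len Q) ∩ W.cube P).Nonempty},
      W.Ufat P

/-- The non-tangential maximal function of aperture `α`. -/
def ntMaxA (W : WhitneySetup n E) (α : ℝ) (u : Euc (n + 1) → ℝ) (x : Euc (n + 1)) : ℝ≥0∞ :=
  ⨆ Y ∈ coneA n E W α x, ENNReal.ofReal |u Y|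

/-- The complement of the big ball `B(z₀, c · diam E)`, nonempty only when `E` is bounded;
it is the extra part of the hatted cones `Γ̂`. -/
def farSet (z₀ : Euc (n + 1)) (c : ℝ) : Set (Euc (n + 1)) :=
  {Y | EMetric.diam E ≠ ⊤ ∧ c * (EMetric.diam E).toReal < dist Y z₀}

/-- Non-tangential maximal function over the hatted cones `Γ̂(x)`. -/
def ntMaxHat (W : WhitneySetup n E) (c : ℝ) (u : Euc (n + 1) → ℝ) (x : Euc (n + 1)) : ℝ≥0∞ :=
  ⨆ Y ∈ coneW n E W x ∪ farSet n E W.z0 c, ENNReal.ofReal |u Y|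

/-- Non-tangential maximal function of aperture `α` over the hatted cones `Γ̂_α(x)`. -/
def ntMaxHatA (W : WhitneySetup n E) (α c : ℝ) (u : Euc (n + 1) → ℝ) (x : Euc (n + 1)) : ℝ≥0∞ :=
  ⨆ Y ∈ coneA n E W α x ∪ farSet n E W.z0 c, ENNReal.ofReal |u Y|

/-- The dyadic maximal operator `M_𝔻` on `E`. -/
def dyadMax (W : WhitneySetup n E) (g : Euc (n + 1) → ℝ≥0∞) (x : Euc (n + 1)) : ℝ≥0∞ :=
  ⨆ Q ∈ {Q : W.ι | x ∈ W.cube Q},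
    (sigmaE n E (W.cube Q))⁻¹ * ∫⁻ z in W.cube Q, g z ∂(sigmaE n E)

/-- The Carleson box `T_Q`. -/
def carlBox (W : WhitneySetup n E) (Q : W.ι) : Set (Euc (n + 1)) :=
  interior (⋃ Q' ∈ {Q' : W.ι | W.cube Q' ⊆ W.cube Q}, W.U Q')

/-- The dyadic Carleson functional `𝒞_𝔻(∇f)`, over the augmented family `𝔻*` (when
`diam E < ∞`, pseudo-cubes `F_k` with `T_{F_k} = B(z₀, 2^k diam E)`, `k ≥ Λ₀`, are added). -/
def cDyad (W : WhitneySetup n E) (f : Euc (n + 1) → ℝ) (x : Euc (n + 1)) : ℝ≥0∞ :=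
  (⨆ Q ∈ {Q : W.ι | x ∈ W.cube Q},
      (ENNReal.ofReal (W.len Q ^ n))⁻¹ * totalVar n f (carlBox n E W Q)) ⊔
  (⨆ k ∈ {k : ℕ | W.lam0 ≤ k ∧ EMetric.diam E ≠ ⊤},
      (ENNReal.ofReal ((2 ^ k * (EMetric.diam E).toReal) ^ n))⁻¹ *
        totalVar n f (ball W.z0 (2 ^ k * (EMetric.diam E).toReal) \ E))

/-- Oscillation of `u` over a set `A`. -/
def oscE (u : Euc (n + 1) → ℝ) (A : Set (Euc (n + 1))) : ℝ≥0∞ :=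
  ⨆ Y ∈ A, ⨆ Z ∈ A, ENNReal.ofReal (u Y - u Z)

/-- `M_𝔻(N_* u)(Q) := sup_{R ⊇ Q} ⨍_R N_* u dσ`. -/
def mval (W : WhitneySetup n E) (u : Euc (n + 1) → ℝ) (Q : W.ι) : ℝ≥0∞ :=
  ⨆ R ∈ {R : W.ι | W.cube Q ⊆ W.cube R},
    (sigmaE n E (W.cube R))⁻¹ * ∫⁻ y in W.cube R, ntMax n E W u y ∂(sigmaE n E)

/-- The component `U_Q^i` is red: `osc_{U_Q^i} u > ε M_𝔻(N_*u)(Q)`. -/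
def isRed (W : WhitneySetup n E) (u : Euc (n + 1) → ℝ) (ε : ℝ) (Q : W.ι) (i : ℕ) : Prop :=
  ENNReal.ofReal ε * mval n E W u Q < oscE n u (W.comp Q i)

/-- The collection `ℛ` of "large oscillation" cubes. -/
def RedSet (W : WhitneySetup n E) (u : Euc (n + 1) → ℝ) (ε : ℝ) : Set W.ι :=
  {Q | ∃ i, i < W.ncomp Q ∧ isRed n E W u ε Q i}

/-- The sawtooth region `Ω_𝒜` over a family of cubes. -/
def sawtooth (W : WhitneySetup n E) (A : Set W.ι) : Set (Euc (n + 1)) :=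
  interior (⋃ Q ∈ A, W.U Q)

/-! ### The bilateral corona decomposition -/

/-- A Lipschitz graph in `ℝ^{n+1}` with Lipschitz constant at most `eta`. -/
def IsLipschitzGraph (eta : ℝ) (G : Set (Euc (n + 1))) : Prop :=
  ∃ (L : WithLp 2 (EuclideanSpace ℝ (Fin n) × ℝ) ≃ₗᵢ[ℝ] Euc (n + 1))
    (g : EuclideanSpace ℝ (Fin n) → ℝ),
      LipschitzWith (Real.toNNReal eta) g ∧
        G = Set.range fun x : EuclideanSpace ℝ (Fin n) =>
          L ((WithLp.equiv 2 (EuclideanSpace ℝ (Fin n) × ℝ)).symm (x, g x))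

/-- The bilateral corona decomposition `𝔻(E) = 𝒢 ∪ ℬ` of Hofmann–Martell–Mayboroda:
`𝒢` is a disjoint union of coherent stopping time regimes `𝒮`; the bad cubes and the maximal
cubes `Q(𝒮)` satisfy a Carleson packing condition; each regime is well approximated by a
Lipschitz graph; and the Whitney region of each good cube has exactly two components. -/
structure Corona (W : WhitneySetup n E) where
  Regime : Type
  regime : Regime → Set W.ι
  top : Regime → W.ι
  top_mem : ∀ s, top s ∈ regime s
  regime_disj : ∀ s t, s ≠ t → Disjoint (regime s) (regime t)
  coh_max : ∀ s, ∀ Q ∈ regime s, W.cube Q ⊆ W.cube (top s)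
  coh_between : ∀ s, ∀ Q ∈ regime s, ∀ P, W.cube Q ⊆ W.cube P →
      W.cube P ⊆ W.cube (top s) → P ∈ regime s
  Good : Set W.ι
  good_eq : Good = ⋃ s, regime s
  Cb : ℝ
  Cb_pos : 0 < Cb
  pack : ∀ Q₀ : W.ι,
    (∑' Q : {Q : W.ι // Q ∉ Good ∧ W.cube Q ⊆ W.cube Q₀}, sigmaE n E (W.cube Q.1)) +
      (∑' s : {s : Regime // W.cube (top s) ⊆ W.cube Q₀}, sigmaE n E (W.cube (top s.1)))
        ≤ ENNReal.ofReal Cb * sigmaE n E (W.cube Q₀)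
  good_two : ∀ Q ∈ Good, W.ncomp Q = 2
  Xp : W.ι → Euc (n + 1)
  Xm : W.ι → Euc (n + 1)
  Xp_mem : ∀ Q ∈ Good, Xp Q ∈ W.comp Q 0
  Xm_mem : ∀ Q ∈ Good, Xm Q ∈ W.comp Q 1
  eta : ℝ
  KK : ℝ
  eta_pos : 0 < eta
  eta_lt : eta < 1
  KK_ge : 1 ≤ KK
  graph : Regime → Set (Euc (n + 1))
  graph_lip : ∀ s, IsLipschitzGraph n eta (graph s)
  graph_approx : ∀ s, ∀ Q ∈ regime s,
    (∀ x ∈ E ∩ ball (W.center Q) (KK * W.len Q), infDist x (graph s) < eta * W.len Q) ∧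
      (∀ y ∈ graph s ∩ ball (W.center Q) (KK * W.len Q), infDist y E < eta * W.len Q)

/-- `Y_Q^+ := X_{Q̃}^+` where `Q̃` is the dyadic parent of `Q`, unless `Q = Q(𝒮)` in which
case `Y_Q^+ := X_Q^+`. -/
def Yp (W : WhitneySetup n E) (C : Corona n E W) (s : C.Regime) (Q : W.ι) : Euc (n + 1) :=
  C.Xp (if Q = C.top s then Q else W.parent Q)

/-- `Y_Q^-`, as in `Yp`. -/
def Ym (W : WhitneySetup n E) (C : Corona n E W) (s : C.Regime) (Q : W.ι) : Euc (n + 1) :=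
  C.Xm (if Q = C.top s then Q else W.parent Q)

/-! ### Generation cubes -/

/-- The stopping condition for the generation-cube construction started at `Q₀`. -/
def stopCond (W : WhitneySetup n E) (C : Corona n E W) (u : Euc (n + 1) → ℝ) (ε : ℝ)
    (s : C.Regime) (Q₀ Q : W.ι) : Prop :=
  Q ∉ C.regime s ∨
    ENNReal.ofReal ε * mval n E W u Q <
      ENNReal.ofReal |u (Yp n E W C s Q) - u (Yp n E W C s Q₀)| ∨
    ENNReal.ofReal ε * mval n E W u Q <
      ENNReal.ofReal |u (Ym n E W C s Q) - u (Ym n E W C s Q₀)|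

/-- The maximal stopping cubes `ℱ₁(Q₀)` of the generation construction started at `Q₀`. -/
def firstStop (W : WhitneySetup n E) (C : Corona n E W) (u : Euc (n + 1) → ℝ) (ε : ℝ)
    (s : C.Regime) (Q₀ : W.ι) : Set W.ι :=
  {Q | W.cube Q ⊂ W.cube Q₀ ∧ stopCond n E W C u ε s Q₀ Q ∧
    ∀ R, W.cube Q ⊂ W.cube R → W.cube R ⊂ W.cube Q₀ → ¬stopCond n E W C u ε s Q₀ R}

/-- The first generation cubes `G₁(Q₀) := ℱ₁(Q₀) ∩ 𝒮`. -/
def firstGen (W : WhitneySetup n E) (C : Corona n E W) (u : Euc (n + 1) → ℝ) (ε : ℝ)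
    (s : C.Regime) (Q₀ : W.ι) : Set W.ι :=
  firstStop n E W C u ε s Q₀ ∩ C.regime s

/-- The `k`-th generation cubes of the regime `s`. -/
def genFam (W : WhitneySetup n E) (C : Corona n E W) (u : Euc (n + 1) → ℝ) (ε : ℝ)
    (s : C.Regime) : ℕ → Set W.ι
  | 0 => {C.top s}
  | k + 1 => ⋃ Q ∈ genFam W C u ε s k, firstGen n E W C u ε s Q

/-- All generation cubes `G(𝒮)` of the regime `s`. -/
def genCubes (W : WhitneySetup n E) (C : Corona n E W) (u : Euc (n + 1) → ℝ) (ε : ℝ)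
    (s : C.Regime) : Set W.ι :=
  ⋃ k, genFam n E W C u ε s k

/-- All generation cubes `G* := ⋃_𝒮 G(𝒮)`. -/
def genStar (W : WhitneySetup n E) (C : Corona n E W) (u : Euc (n + 1) → ℝ) (ε : ℝ) :
    Set W.ι :=
  ⋃ s, genCubes n E W C u ε s

/-- The semicoherent subregime `𝒮'(Q₀)`: subcubes of `Q₀` not contained in any stopping cube. -/
def genReg (W : WhitneySetup n E) (C : Corona n E W) (u : Euc (n + 1) → ℝ) (ε : ℝ)
    (s : C.Regime) (Q₀ : W.ι) : Set W.ι :=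
  {Q | W.cube Q ⊆ W.cube Q₀ ∧ ∀ P ∈ firstStop n E W C u ε s Q₀, ¬W.cube Q ⊆ W.cube P}

/-! ### Principal cubes -/

/-- Stopping condition of the principal-cube construction. -/
def princStop (W : WhitneySetup n E) (u : Euc (n + 1) → ℝ) (Q' Q : W.ι) : Prop :=
  2 * mval n E W u Q < mval n E W u Q'

/-- One step of the principal-cube construction. -/
def princNext (W : WhitneySetup n E) (u : Euc (n + 1) → ℝ) (P : Set W.ι) : Set W.ι :=
  P ∪ {Q' | Q' ∉ P ∧ ∃ Q ∈ P, W.cube Q' ⊂ W.cube Q ∧ princStop n E W u Q' Q ∧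
    ∀ Q'', W.cube Q' ⊂ W.cube Q'' → W.cube Q'' ⊂ W.cube Q →
      Q'' ∉ P ∧ ¬princStop n E W u Q'' Q}

/-- The stages `𝒫_k` of the principal-cube construction started from `I`. -/
def princFam (W : WhitneySetup n E) (u : Euc (n + 1) → ℝ) (I : Set W.ι) : ℕ → Set W.ι
  | 0 => I
  | k + 1 => princNext n E W u (princFam W u I k)

/-- The collection `𝒫` of principal cubes. -/
def princ (W : WhitneySetup n E) (u : Euc (n + 1) → ℝ) (I : Set W.ι) : Set W.ι :=
  ⋃ k, princFam n E W u I k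

/-- `P = π_𝒫 Q`, the smallest cube of `𝒫` containing `Q`. -/
def IsProj (W : WhitneySetup n E) (P𝒫 : Set W.ι) (Q P : W.ι) : Prop :=
  P ∈ P𝒫 ∧ W.cube Q ⊆ W.cube P ∧ ∀ R ∈ P𝒫, W.cube Q ⊆ W.cube R → W.len P ≤ W.len R

/-- `I` is an increasing exhausting sequence of cubes. -/
def Exhausting (W : WhitneySetup n E) (I : Set W.ι) : Prop :=
  (∀ Q ∈ I, ∀ P ∈ I, W.cube Q ⊆ W.cube P ∨ W.cube P ⊆ W.cube Q) ∧
    (⋃ Q ∈ I, W.cube Q) = E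

/-! ### The construction of the local approximating function on `T_{Q₀}` -/

/-- The data of the Hofmann–Martell–Mayboroda construction of the approximating function on
the Carleson box `T_{Q₀}`: an ordered family of generation cubes `Q_k = Q(𝒮'_k)` whose
subregimes cover `𝒢 ∩ 𝔻_{Q₀}`, an enumeration of the cubes of `(ℛ ∪ ℬ) ∩ 𝔻_{Q₀}`, and a
choice of Whitney centers in each component (used for the blue components). -/
structure LocalApprox (W : WhitneySetup n E) (C : Corona n E W)
    (u : Euc (n + 1) → ℝ) (ε : ℝ) (Q₀ : W.ι) where
  regOf : ℕ → C.Regime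
  seq : ℕ → W.ι
  seq_mem : ∀ k, seq k ∈ C.regime (regOf k)
  seq_gen : ∀ k, seq k ∈ genCubes n E W C u ε (regOf k)
  seq_mono : ∀ k, W.len (seq (k + 1)) ≤ W.len (seq k)
  seq_covers : ∀ Q ∈ C.Good, W.cube Q ⊆ W.cube Q₀ →
      ∃ k, Q ∈ genReg n E W C u ε (regOf k) (seq k)
  bad : ℕ → Option W.ι
  bad_mem : ∀ k Q, bad k = some Q →
      (Q ∈ RedSet n E W u ε ∨ Q ∉ C.Good) ∧ W.cube Q ⊆ W.cube Q₀
  bad_surj : ∀ Q, (Q ∈ RedSet n E W u ε ∨ Q ∉ C.Good) → W.cube Q ⊆ W.cube Q₀ →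
      ∃ k, bad k = some Q
  blueCtr : W.ι → ℕ → Euc (n + 1)
  blueCtr_mem : ∀ Q i, i < W.ncomp Q → blueCtr Q i ∈ W.comp Q i

variable {W : WhitneySetup n E} {C : Corona n E W} {u : Euc (n + 1) → ℝ} {ε : ℝ} {Q₀ : W.ι}

/-- `Ω_{𝒮'_k}`. -/
def OmegaSk (L : LocalApprox n E W C u ε Q₀) (k : ℕ) : Set (Euc (n + 1)) :=
  interior (⋃ Q ∈ genReg n E W C u ε (L.regOf k) (L.seq k), W.U Q)

/-- `Ω_{𝒮'_k}^+`. -/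
def OmegaSkP (L : LocalApprox n E W C u ε Q₀) (k : ℕ) : Set (Euc (n + 1)) :=
  interior (⋃ Q ∈ genReg n E W C u ε (L.regOf k) (L.seq k), W.comp Q 0)

/-- `Ω_{𝒮'_k}^-`. -/
def OmegaSkM (L : LocalApprox n E W C u ε Q₀) (k : ℕ) : Set (Euc (n + 1)) :=
  interior (⋃ Q ∈ genReg n E W C u ε (L.regOf k) (L.seq k), W.comp Q 1)

/-- `A_k^+ := Ω_{𝒮_k'}^+ \ (A_1 ∪ … ∪ A_{k-1})`. -/
def Ap (L : LocalApprox n E W C u ε Q₀) (k : ℕ) : Set (Euc (n + 1)) :=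
  OmegaSkP n E L k \ ⋃ j ∈ Finset.range k, OmegaSk n E L j

/-- `A_k^-`. -/
def Am (L : LocalApprox n E W C u ε Q₀) (k : ℕ) : Set (Euc (n + 1)) :=
  OmegaSkM n E L k \ ⋃ j ∈ Finset.range k, OmegaSk n E L j

/-- `φ₀ := Σ_k (u(Y_{Q_k}^+) 1_{A_k^+} + u(Y_{Q_k}^-) 1_{A_k^-})`. -/
def phi0 (L : LocalApprox n E W C u ε Q₀) (Y : Euc (n + 1)) : ℝ :=
  ∑' k : ℕ,
    ((Ap n E L k).indicator (fun _ => u (Yp n E W C (L.regOf k) (L.seq k))) Y +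
      (Am n E L k).indicator (fun _ => u (Ym n E W C (L.regOf k) (L.seq k))) Y)

/-- The Whitney region of the `k`-th enumerated bad/red cube. -/
def Ubad (L : LocalApprox n E W C u ε Q₀) (k : ℕ) : Set (Euc (n + 1)) :=
  (L.bad k).elim ∅ W.U

/-- `V_k := U_{Q(k)} \ (V_1 ∪ … ∪ V_{k-1})`. -/
def Vk (L : LocalApprox n E W C u ε Q₀) (k : ℕ) : Set (Euc (n + 1)) :=
  Ubad n E L k \ ⋃ j ∈ Finset.range k, Ubad n E L j

/-- `V_k^i := U_{Q(k)}^i \ (V_1 ∪ … ∪ V_{k-1})`. -/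
def Vki (L : LocalApprox n E W C u ε Q₀) (k i : ℕ) : Set (Euc (n + 1)) :=
  ((L.bad k).elim ∅ fun Q => W.comp Q i) \ ⋃ j ∈ Finset.range k, Ubad n E L j

/-- `φ₁ := u` on the red pieces `V_k^i` and `φ₁ := u(X_I)` on the blue pieces. -/
def phi1 (L : LocalApprox n E W C u ε Q₀) (Y : Euc (n + 1)) : ℝ :=
  ∑' k : ℕ, ∑' i : ℕ,
    (Vki n E L k i).indicator
      (fun Z => (L.bad k).elim 0 fun Q =>
        if isRed n E W u ε Q i then u Z else u (L.blueCtr Q i)) Y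

/-- `Ω₁ := int (⋃_k V_k)`. -/
def Omega1 (L : LocalApprox n E W C u ε Q₀) : Set (Euc (n + 1)) :=
  interior (⋃ k, Vk n E L k)

/-- The approximating function `φ` on the Carleson box `T_{Q₀}`:
`φ = φ₁` on `Ω₁`, `φ = u` on `∂Ω₁` and `φ = φ₀` elsewhere. -/
def phiLoc (L : LocalApprox n E W C u ε Q₀) (Y : Euc (n + 1)) : ℝ :=
  if Y ∈ Omega1 n E L then phi1 n E L Y
  else if Y ∈ closure (Omega1 n E L) then u Y
  else phi0 n E L Y

/-! ### Whitney boxes and their fattened versions (for the red/blue component geometry) -/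

/-- The closed axis-parallel box with center `c` and side length `l`. -/
def boxSet (c : Euc (n + 1)) (l : ℝ) : Set (Euc (n + 1)) :=
  {Y | ∀ i, |Y i - c i| ≤ l / 2}

/-- The collections `𝒲_Q^±` of Whitney cubes (recorded by their centers and side lengths)
making up the two components of the Whitney regions of good cubes, together with the
fattening parameter `τ`; `I* = (1+τ)I`, `I** = (1+2τ)I`, `I*** = (1+3τ)I`. -/
structure WhitneyCubes (W : WhitneySetup n E) (C : Corona n E W) where
  τ : ℝ
  τ_pos : 0 < τ
  τ_lt : τ < 1
  cb : ℝ
  cb_ge : 1 ≤ cb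
  Wp : W.ι → Finset (Euc (n + 1) × ℝ)
  Wm : W.ι → Finset (Euc (n + 1) × ℝ)
  side_pos : ∀ Q : W.ι, ∀ p ∈ Wp Q ∪ Wm Q, 0 < p.2
  len_comp : ∀ Q : W.ι, ∀ p ∈ Wp Q ∪ Wm Q, W.len Q / cb ≤ p.2 ∧ p.2 ≤ cb * W.len Q
  delta_comp : ∀ Q : W.ι, ∀ p ∈ Wp Q ∪ Wm Q, ∀ Y ∈ boxSet n p.1 ((1 + 3 * τ) * p.2),
      p.2 / cb ≤ infDist Y E ∧ infDist Y E ≤ cb * p.2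
  near : ∀ Q : W.ι, ∀ p ∈ Wp Q ∪ Wm Q, infDist p.1 (W.cube Q) ≤ cb * W.len Q
  comp0_eq : ∀ Q ∈ C.Good, W.comp Q 0 = ⋃ p ∈ Wp Q, interior (boxSet n p.1 ((1 + τ) * p.2))
  comp1_eq : ∀ Q ∈ C.Good, W.comp Q 1 = ⋃ p ∈ Wm Q, interior (boxSet n p.1 ((1 + τ) * p.2))
  overlap_len : ∀ Q ∈ C.Good, ∀ Q' ∈ C.Good, ∀ p ∈ Wp Q, ∀ q ∈ Wp Q',
      (boxSet n p.1 ((1 + 3 * τ) * p.2) ∩ boxSet n q.1 ((1 + 3 * τ) * q.2)).Nonempty →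
        p.2 ≤ cb * q.2 ∧ W.len Q ≤ cb * W.len Q'

/-! ### The three notions of `ε`-approximability -/

/-- `u` is `ε`-approximable (in `L^∞`). -/
def EpsApproxLinf (u : Euc (n + 1) → ℝ) (ε : ℝ) : Prop :=
  ∃ φ, BVloc n φ Eᶜ ∧ (∀ Y ∈ Eᶜ, |u Y - φ Y| < ε) ∧
    ∃ Cε : ℝ, ∀ x ∈ E, ∀ r : ℝ, 0 < r →
      totalVar n φ (ball x r \ E) ≤ ENNReal.ofReal (Cε * r ^ n)

/-- `u` is `ε`-approximable in `L^p`. -/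
def EpsApproxLp (W : WhitneySetup n E) (u : Euc (n + 1) → ℝ) (p ε : ℝ) : Prop :=
  ∃ φ, BVloc n φ Eᶜ ∧ ∃ Cp Dpe : ℝ≥0∞, Cp ≠ ⊤ ∧ Dpe ≠ ⊤ ∧
    lpNormE (sigmaE n E) p (ntMax n E W fun Y => u Y - φ Y) ≤
      ENNReal.ofReal ε * Cp * lpNormE (sigmaE n E) p (ntMax n E W u) ∧
    lpNormE (sigmaE n E) p (carlGrad n E φ) ≤
      Dpe * lpNormE (sigmaE n E) p (ntMax n E W u)

/-- `u` is pointwise `ε`-approximable. -/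
def PtwiseApprox (W : WhitneySetup n E) (u : Euc (n + 1) → ℝ) (ε : ℝ) : Prop :=
  ∃ φ, BVloc n φ Eᶜ ∧ ∃ K D : ℝ≥0∞, K ≠ ⊤ ∧ D ≠ ⊤ ∧
    ∀ᵐ x ∂(sigmaE n E),
      ntMax n E W (fun Y => u Y - φ Y) x ≤
        K * ENNReal.ofReal ε * dyadMax n E W (ntMax n E W u) x ∧
      cDyad n E W φ x ≤ D * hlMax n E (dyadMax n E W (ntMax n E W u)) x

end

/-! Cubes selected below a principal cube `Q` have some average of `N_* u` above
`2 M_𝔻(N_* u)(Q)`, so by a Chebyshev argument they fill at most half of `σ(Q)`. Inducting on the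
stage, the cubes of `𝒫` inside `Q₀` are either in `ℐ` (at most `C_ℐ σ(Q₀)`), selected below a
cube of `𝒫` inside `Q₀` (at most half of the previous total), or selected below a cube of `𝒫`
containing `Q₀`; the last ones are pairwise disjoint, since no cube of `𝒫` lies strictly between
a selected cube and the cube it was selected below. Hence the constant `2 (C_ℐ + 1)`. -/

section Laminar

variable {ι X : Type*} {c : ι → Set X}

theorem pairwiseDisjoint_of_laminar
    (hc : ∀ i j, c i ⊆ c j ∨ c j ⊆ c i ∨ Disjoint (c i) (c j)) {s : Set ι}
    (hs : ∀ i ∈ s, ∀ j ∈ s, c i ⊆ c j → i = j) : s.PairwiseDisjoint c := by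
  intro i hi j hj hij
  rcases hc i j with h | h | h
  · exact absurd (hs i hi j hj h) hij
  · exact absurd (hs j hj i hi h).symm hij
  · exact h

theorem exists_pairwiseDisjoint_cover_of_laminar
    (hc : ∀ i j, c i ⊆ c j ∨ c j ⊆ c i ∨ Disjoint (c i) (c j)) (hinj : Function.Injective c)
    (H : Finset ι) :
    ∃ H' ⊆ H, (H' : Set ι).PairwiseDisjoint c ∧ ∀ i ∈ H, ∃ j ∈ H', c i ⊆ c j := by
  refine ⟨H.filter (MaximalFor (· ∈ H) c), Finset.filter_subset _ _, ?_, fun i hi => ?_⟩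
  · refine pairwiseDisjoint_of_laminar hc fun i hi j hj hij => hinj ?_
    simp only [Finset.mem_coe, Finset.mem_filter] at hi hj
    exact hij.antisymm (hi.2.2 hj.1 hij)
  · obtain ⟨j, hj, hjmax⟩ :=
      (H.filter (c i ⊆ c ·)).exists_maximalFor c ⟨i, by simp [hi]⟩
    rw [Finset.mem_filter] at hj
    refine ⟨j, Finset.mem_filter.mpr ⟨hj.1, hj.1, fun k hk hjk => ?_⟩, hj.2⟩
    exact hjmax (Finset.mem_filter.mpr ⟨hk, hj.2.trans hjk⟩) hjk

variable [MeasurableSpace X] (μ : Measure X) {F : Finset ι} {A : Set X}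

theorem Finset.sum_measure_le_of_pairwiseDisjoint (hd : (F : Set ι).PairwiseDisjoint c)
    (hm : ∀ i ∈ F, MeasurableSet (c i)) (hA : ∀ i ∈ F, c i ⊆ A) :
    ∑ i ∈ F, μ (c i) ≤ μ A := by
  rw [← measure_biUnion_finset hd hm]
  exact measure_mono (iUnion₂_subset hA)

theorem Finset.sum_measure_le_of_subset_cover {H : Finset ι} (hd : (F : Set ι).PairwiseDisjoint c)
    (hm : ∀ i ∈ F, MeasurableSet (c i)) (hcov : ∀ i ∈ F, ∃ j ∈ H, c i ⊆ c j) :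
    ∑ i ∈ F, μ (c i) ≤ ∑ j ∈ H, μ (c j) := by
  rw [← measure_biUnion_finset hd hm]
  refine (measure_mono (iUnion₂_subset fun i hi => ?_)).trans (measure_biUnion_finset_le _ _)
  obtain ⟨j, hj, hij⟩ := hcov i hi
  exact hij.trans (Set.subset_biUnion_of_mem (u := c) (Finset.mem_coe.mpr hj))

theorem Finset.sum_setLIntegral_le_of_pairwiseDisjoint (g : X → ℝ≥0∞)
    (hd : (F : Set ι).PairwiseDisjoint c) (hm : ∀ i ∈ F, MeasurableSet (c i))
    (hA : ∀ i ∈ F, c i ⊆ A) :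
    ∑ i ∈ F, ∫⁻ x in c i, g x ∂μ ≤ ∫⁻ x in A, g x ∂μ := by
  rw [← lintegral_biUnion_finset hd hm]
  exact lintegral_mono_set (iUnion₂_subset hA)

end Laminar

theorem ENNReal.tsum_subtype_le_iff {ι : Type*} {p : ι → Prop} {f : ι → ℝ≥0∞} {a : ℝ≥0∞} :
    ∑' i : {i // p i}, f i ≤ a ↔ ∀ F : Finset ι, (∀ i ∈ F, p i) → ∑ i ∈ F, f i ≤ a := by
  rw [ENNReal.tsum_eq_iSup_sum, iSup_le_iff]
  refine ⟨fun h F hF => ?_, fun h F => ?_⟩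
  · simpa only [Finset.sum_subtype_of_mem f hF] using h (F.subtype p)
  · have hF := h (F.map (Function.Embedding.subtype p)) fun i hi => by
      obtain ⟨j, -, rfl⟩ := Finset.mem_map.mp hi
      exact j.2
    rwa [Finset.sum_map] at hF

theorem DyadicSystem.subset_total_of_common_subcube {n : ℕ} {E : Set (Euc (n + 1))}
    (D : DyadicSystem n E) {P Q R : D.ι} (hQ : D.cube P ⊆ D.cube Q) (hR : D.cube P ⊆ D.cube R) :
    D.cube Q ⊆ D.cube R ∨ D.cube R ⊆ D.cube Q := by
  rcases D.nested Q R with h | h | h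
  · exact Or.inl h
  · exact Or.inr h
  · obtain ⟨x, hx⟩ := D.cube_ne P
    exact absurd (hR hx) (disjoint_left.mp h (hQ hx))

section PrincipalCubes

variable {n : ℕ} {E : Set (Euc (n + 1))} (W : WhitneySetup n E) (u : Euc (n + 1) → ℝ)

noncomputable def avgNt (R : W.ι) : ℝ≥0∞ :=
  (sigmaE n E (W.cube R))⁻¹ * ∫⁻ y in W.cube R, ntMax n E W u y ∂(sigmaE n E)

variable {W u}

theorem avgNt_le_mval {Q R : W.ι} (h : W.cube Q ⊆ W.cube R) : avgNt W u R ≤ mval n E W u Q :=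
  le_iSup₂_of_le (f := fun R (_ : R ∈ {R : W.ι | W.cube Q ⊆ W.cube R}) => avgNt W u R) R h le_rfl

theorem mval_anti {Q R : W.ι} (h : W.cube Q ⊆ W.cube R) : mval n E W u R ≤ mval n E W u Q :=
  biSup_mono fun _ hS => h.trans hS

theorem lintegral_ntMax_le_mval_mul (Q : W.ι) (hQ : sigmaE n E (W.cube Q) ≠ ⊤) :
    ∫⁻ y in W.cube Q, ntMax n E W u y ∂(sigmaE n E) ≤ mval n E W u Q * sigmaE n E (W.cube Q) := by
  by_cases h0 : sigmaE n E (W.cube Q) = 0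
  · simp [Measure.restrict_eq_zero.mpr h0]
  have h := avgNt_le_mval (u := u) (subset_refl (W.cube Q))
  rwa [avgNt, ← ENNReal.div_eq_inv_mul, ENNReal.div_le_iff h0 hQ] at h

theorem mul_measure_le_lintegral_of_lt_avgNt {R : W.ι} {a : ℝ≥0∞} (h : a < avgNt W u R) :
    a * sigmaE n E (W.cube R) ≤ ∫⁻ y in W.cube R, ntMax n E W u y ∂(sigmaE n E) := by
  rw [avgNt, ← ENNReal.div_eq_inv_mul] at h
  exact ENNReal.mul_le_of_le_div h.le

theorem exists_subcube_lt_avgNt {P Q : W.ι} {a : ℝ≥0∞} (hPQ : W.cube P ⊆ W.cube Q)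
    (hQ : mval n E W u Q ≤ a) (hP : a < mval n E W u P) :
    ∃ R, W.cube P ⊆ W.cube R ∧ W.cube R ⊆ W.cube Q ∧ a < avgNt W u R := by
  simp only [mval, lt_iSup_iff] at hP
  obtain ⟨R, hPR, hR⟩ := hP
  refine ⟨R, hPR, ?_, hR⟩
  refine (W.subset_total_of_common_subcube hPR hPQ).resolve_right fun hQR => ?_
  exact (hR.trans_le ((avgNt_le_mval hQR).trans hQ)).false

theorem mval_ne_zero_of_avgNt_pos {Q R : W.ι} (hRQ : W.cube R ⊆ W.cube Q)
    (hQ : sigmaE n E (W.cube Q) ≠ ⊤) (hR : 0 < avgNt W u R) : mval n E W u Q ≠ 0 := by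
  intro h0
  have hQ0 := lintegral_ntMax_le_mval_mul (u := u) Q hQ
  rw [h0, zero_mul, nonpos_iff_eq_zero] at hQ0
  have hR0 : ∫⁻ y in W.cube R, ntMax n E W u y ∂(sigmaE n E) = 0 :=
    le_antisymm (hQ0 ▸ lintegral_mono_set hRQ) zero_le
  simp [avgNt, hR0] at hR

/-- Each cube of `F` lies in a maximal cube `R ⊆ Q` with `⨍_R N_* u > 2 M_𝔻(N_* u)(Q)`; these are
disjoint and together carry at most `∫_Q N_* u ≤ M_𝔻(N_* u)(Q) σ(Q)`. -/
theorem sum_measure_le_half_of_two_mval_lt {Q : W.ι} {F : Finset W.ι}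
    (hd : (F : Set W.ι).PairwiseDisjoint W.cube)
    (hF : ∀ P ∈ F, W.cube P ⊆ W.cube Q ∧ 2 * mval n E W u Q < mval n E W u P) :
    ∑ P ∈ F, sigmaE n E (W.cube P) ≤ 2⁻¹ * sigmaE n E (W.cube Q) := by
  by_cases hQ : sigmaE n E (W.cube Q) = ⊤
  · simp [hQ]
  rcases F.eq_empty_or_nonempty with rfl | ⟨P₀, hP₀⟩
  · simp
  have : Nonempty W.ι := ⟨P₀⟩
  set m := mval n E W u Q
  have hle : m ≤ 2 * m := le_mul_of_one_le_left zero_le one_le_two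
  choose! R hPR hRQ hR using fun P hP =>
    exists_subcube_lt_avgNt (hF P hP).1 hle (hF P hP).2
  obtain ⟨H, hHsub, hHd, hHcov⟩ :=
    exists_pairwiseDisjoint_cover_of_laminar W.nested W.cube_inj (F.image R)
  have hHQ : ∀ M ∈ H, W.cube M ⊆ W.cube Q ∧ 2 * m < avgNt W u M := fun M hM => by
    obtain ⟨P, hP, rfl⟩ := Finset.mem_image.mp (hHsub hM)
    exact ⟨hRQ P hP, hR P hP⟩
  have hm0 : m ≠ 0 :=
    mval_ne_zero_of_avgNt_pos (hRQ P₀ hP₀) hQ (zero_le.trans_lt (hR P₀ hP₀))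
  have hmtop : m ≠ ⊤ := fun h => by simpa [h] using (hF P₀ hP₀).2
  have hcover : ∑ P ∈ F, sigmaE n E (W.cube P) ≤ ∑ M ∈ H, sigmaE n E (W.cube M) :=
    Finset.sum_measure_le_of_subset_cover _ hd (fun P _ => W.cube_meas P) fun P hP => by
      obtain ⟨M, hM, hRM⟩ := hHcov (R P) (Finset.mem_image_of_mem R hP)
      exact ⟨M, hM, (hPR P hP).trans hRM⟩
  have key : 2 * m * ∑ P ∈ F, sigmaE n E (W.cube P) ≤ 2 * m * (2⁻¹ * sigmaE n E (W.cube Q)) :=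
    calc 2 * m * ∑ P ∈ F, sigmaE n E (W.cube P)
        ≤ ∑ M ∈ H, 2 * m * sigmaE n E (W.cube M) := by
          rw [← Finset.mul_sum]
          gcongr
      _ ≤ ∑ M ∈ H, ∫⁻ y in W.cube M, ntMax n E W u y ∂(sigmaE n E) :=
          Finset.sum_le_sum fun M hM => mul_measure_le_lintegral_of_lt_avgNt (hHQ M hM).2
      _ ≤ ∫⁻ y in W.cube Q, ntMax n E W u y ∂(sigmaE n E) :=
          Finset.sum_setLIntegral_le_of_pairwiseDisjoint _ _ hHd (fun M _ => W.cube_meas M)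
            fun M hM => (hHQ M hM).1
      _ ≤ m * sigmaE n E (W.cube Q) := lintegral_ntMax_le_mval_mul Q hQ
      _ = 2 * m * (2⁻¹ * sigmaE n E (W.cube Q)) := by
          rw [mul_comm 2 m, mul_assoc, ← mul_assoc 2, ENNReal.mul_inv_cancel two_ne_zero
            ENNReal.ofNat_ne_top, one_mul]
  exact (ENNReal.mul_le_mul_iff_right (by simp [hm0])
    (ENNReal.mul_ne_top ENNReal.ofNat_ne_top hmtop)).mp key

variable (W u)

def IsMaximalStop (Q P : W.ι) : Prop :=
  W.cube P ⊂ W.cube Q ∧ princStop n E W u P Q ∧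
    ∀ R, W.cube P ⊂ W.cube R → W.cube R ⊂ W.cube Q → ¬princStop n E W u R Q

def IsStopChild (S : Set W.ι) (Q P : W.ι) : Prop :=
  Q ∈ S ∧ P ∉ S ∧ IsMaximalStop W u Q P ∧
    ∀ R, W.cube P ⊂ W.cube R → W.cube R ⊂ W.cube Q → R ∉ S

variable {W u}

theorem pairwiseDisjoint_of_isMaximalStop {Q : W.ι} {F : Set W.ι}
    (hF : ∀ P ∈ F, IsMaximalStop W u Q P) : F.PairwiseDisjoint W.cube := by
  refine pairwiseDisjoint_of_laminar W.nested fun P hP P' hP' hPP' => ?_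
  by_contra hne
  exact (hF P hP).2.2 P' (hPP'.ssubset_of_ne fun h => hne (W.cube_inj h)) (hF P' hP').1
    (hF P' hP').2.1

theorem sum_measure_le_half_of_isMaximalStop {Q : W.ι} {F : Finset W.ι}
    (hF : ∀ P ∈ F, IsMaximalStop W u Q P) :
    ∑ P ∈ F, sigmaE n E (W.cube P) ≤ 2⁻¹ * sigmaE n E (W.cube Q) :=
  sum_measure_le_half_of_two_mval_lt (pairwiseDisjoint_of_isMaximalStop hF)
    fun P hP => ⟨(hF P hP).1.subset, (hF P hP).2.1⟩

theorem exists_sum_measure_le_half_sum_parents {G : Set W.ι} {F : Finset W.ι}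
    (hF : ∀ P ∈ F, ∃ Q ∈ G, IsMaximalStop W u Q P) :
    ∃ G' : Finset W.ι, ↑G' ⊆ G ∧
      ∑ P ∈ F, sigmaE n E (W.cube P) ≤ 2⁻¹ * ∑ Q ∈ G', sigmaE n E (W.cube Q) := by
  rcases F.eq_empty_or_nonempty with rfl | ⟨P₀, -⟩
  · exact ⟨∅, by simp, by simp⟩
  have : Nonempty W.ι := ⟨P₀⟩
  choose! parent hparent hstop using hF
  refine ⟨F.image parent, by simpa [Set.subset_def] using hparent, ?_⟩
  rw [← Finset.sum_fiberwise_of_maps_to fun P hP => Finset.mem_image_of_mem parent hP,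
    Finset.mul_sum]
  refine Finset.sum_le_sum fun Q _ => sum_measure_le_half_of_isMaximalStop (u := u) fun P hP => ?_
  obtain ⟨hPF, rfl⟩ := Finset.mem_filter.mp hP
  exact hstop P hPF

theorem mem_princNext {S : Set W.ι} {P : W.ι} :
    P ∈ princNext n E W u S ↔ P ∈ S ∨ ∃ Q, IsStopChild W u S Q P := by
  simp only [princNext, IsStopChild, IsMaximalStop, mem_union]
  refine or_congr_right ⟨fun ⟨hP, Q, hQ, hPQ, hstop, hbetween⟩ => ?_,
    fun ⟨Q, hQ, hP, ⟨hPQ, hstop, hnstop⟩, hnmem⟩ => ?_⟩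
  · exact ⟨Q, hQ, hP, ⟨hPQ, hstop, fun R h₁ h₂ => (hbetween R h₁ h₂).2⟩,
      fun R h₁ h₂ => (hbetween R h₁ h₂).1⟩
  · exact ⟨hP, Q, hQ, hPQ, hstop, fun R h₁ h₂ => ⟨hnmem R h₁ h₂, hnstop R h₁ h₂⟩⟩

variable {I : Set W.ι}

theorem princFam_mono : Monotone (princFam n E W u I) :=
  monotone_nat_of_le_succ fun _ => subset_union_left

theorem IsStopChild.mem_princFam_succ {j : ℕ} {Q P : W.ι}
    (h : IsStopChild W u (princFam n E W u I j) Q P) : P ∈ princFam n E W u I (j + 1) :=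
  mem_princNext.mpr (Or.inr ⟨Q, h⟩)

theorem exists_isStopChild_of_mem_princFam {k : ℕ} {P : W.ι}
    (hP : P ∈ princFam n E W u I k) (hPI : P ∉ I) :
    ∃ j < k, ∃ Q, IsStopChild W u (princFam n E W u I j) Q P := by
  induction k with
  | zero => exact absurd hP hPI
  | succ k ih =>
    rcases mem_princNext.mp hP with hP | hQ
    · obtain ⟨j, hj, hQ⟩ := ih hP
      exact ⟨j, hj.trans k.lt_succ_self, hQ⟩
    · exact ⟨k, k.lt_succ_self, hQ⟩

/-- No principal cube lies strictly between a stop child and its parent: the parent of the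
intermediate cube would have to lie below the first parent, forcing the intermediate cube to
stop already with respect to the first parent. -/
theorem IsStopChild.not_ssubset_parent {j₁ j₂ : ℕ} {Q₁ P₁ Q₂ P₂ : W.ι}
    (h₁ : IsStopChild W u (princFam n E W u I j₁) Q₁ P₁)
    (h₂ : IsStopChild W u (princFam n E W u I j₂) Q₂ P₂) (hP : W.cube P₁ ⊂ W.cube P₂) :
    ¬W.cube P₂ ⊂ W.cube Q₁ := by
  intro hPQ
  have hP₂ : P₂ ∉ princFam n E W u I j₁ := h₁.2.2.2 P₂ hP hPQ
  have hj : j₁ ≤ j₂ := by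
    by_contra! hj
    exact hP₂ (princFam_mono hj h₂.mem_princFam_succ)
  have hQ₂Q₁ : W.cube Q₂ ⊆ W.cube Q₁ := by
    rcases W.subset_total_of_common_subcube hPQ.subset h₂.2.2.1.1.subset with hQ₁Q₂ | h
    · rcases hQ₁Q₂.eq_or_ssubset with heq | hss
      · exact heq.ge
      · exact absurd (princFam_mono hj h₁.1) (h₂.2.2.2 Q₁ hPQ hss)
    · exact h
  have hstop : 2 * mval n E W u Q₂ < mval n E W u P₂ := h₂.2.2.1.2.1
  have hnstop : ¬2 * mval n E W u Q₁ < mval n E W u P₂ := h₁.2.2.1.2.2 P₂ hP hPQ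
  exact hnstop (lt_of_le_of_lt (by gcongr; exact mval_anti hQ₂Q₁) hstop)

theorem sum_measure_le_of_parent_not_subset {Q₀ : W.ι} {F : Finset W.ι}
    (hF : ∀ P ∈ F, W.cube P ⊆ W.cube Q₀ ∧
      ∃ j Q, IsStopChild W u (princFam n E W u I j) Q P ∧ ¬W.cube Q ⊆ W.cube Q₀) :
    ∑ P ∈ F, sigmaE n E (W.cube P) ≤ sigmaE n E (W.cube Q₀) := by
  refine Finset.sum_measure_le_of_pairwiseDisjoint _ ?_ (fun P _ => W.cube_meas P)
    fun P hP => (hF P hP).1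
  refine pairwiseDisjoint_of_laminar W.nested fun P₁ h₁ P₂ h₂ h12 => ?_
  by_contra hne
  obtain ⟨j₁, Q₁, hc₁, hQ₁⟩ := (hF P₁ h₁).2
  obtain ⟨j₂, Q₂, hc₂, -⟩ := (hF P₂ h₂).2
  have hQ₀Q₁ : W.cube Q₀ ⊆ W.cube Q₁ :=
    (W.subset_total_of_common_subcube (hF P₁ h₁).1 hc₁.2.2.1.1.subset).resolve_right hQ₁
  refine hc₁.not_ssubset_parent hc₂ (h12.ssubset_of_ne fun h => hne (W.cube_inj h)) ?_
  refine ((hF P₂ h₂).1.trans hQ₀Q₁).ssubset_of_ne fun h => hQ₁ ?_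
  rw [← h]
  exact (hF P₂ h₂).1

theorem sum_measure_princFam_le {CI : ℝ≥0∞} {Q₀ : W.ι}
    (hI : ∀ F : Finset W.ι, (∀ P ∈ F, P ∈ I ∧ W.cube P ⊆ W.cube Q₀) →
      ∑ P ∈ F, sigmaE n E (W.cube P) ≤ CI * sigmaE n E (W.cube Q₀))
    (k : ℕ) {F : Finset W.ι} (hF : ∀ P ∈ F, P ∈ princFam n E W u I k ∧ W.cube P ⊆ W.cube Q₀) :
    ∑ P ∈ F, sigmaE n E (W.cube P) ≤ 2 * (CI + 1) * sigmaE n E (W.cube Q₀) := by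
  induction k generalizing F with
  | zero =>
    refine (hI F hF).trans (mul_le_mul_left ?_ _)
    calc CI ≤ CI + 1 := le_self_add
      _ ≤ 2 * (CI + 1) := le_mul_of_one_le_left zero_le one_le_two
  | succ k ih =>
    let parentInside (P : W.ι) : Prop := ∃ j ≤ k, ∃ Q,
      IsStopChild W u (princFam n E W u I j) Q P ∧ W.cube Q ⊆ W.cube Q₀
    rw [← Finset.sum_filter_add_sum_filter_not F (· ∈ I),
      ← Finset.sum_filter_add_sum_filter_not (F.filter (· ∉ I)) parentInside]
    have hinit := hI (F.filter (· ∈ I)) fun P hP => by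
      rw [Finset.mem_filter] at hP
      exact ⟨hP.2, (hF P hP.1).2⟩
    obtain ⟨G, hG, hinside⟩ := exists_sum_measure_le_half_sum_parents
      (G := {Q | Q ∈ princFam n E W u I k ∧ W.cube Q ⊆ W.cube Q₀})
      (F := (F.filter (· ∉ I)).filter parentInside) fun P hP => by
        obtain ⟨j, hj, Q, hc, hQ⟩ := (Finset.mem_filter.mp hP).2
        exact ⟨Q, ⟨princFam_mono hj hc.1, hQ⟩, hc.2.2.1⟩
    have houtside := sum_measure_le_of_parent_not_subset
      (F := (F.filter (· ∉ I)).filter (¬parentInside ·)) fun P hP => by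
        simp only [Finset.mem_filter] at hP
        obtain ⟨⟨hPF, hPI⟩, hout⟩ := hP
        obtain ⟨j, hj, Q, hc⟩ := exists_isStopChild_of_mem_princFam (hF P hPF).1 hPI
        exact ⟨(hF P hPF).2, j, Q, hc, fun hQ => hout ⟨j, Nat.le_of_lt_succ hj, Q, hc, hQ⟩⟩
    calc _ ≤ CI * sigmaE n E (W.cube Q₀) +
          (2⁻¹ * (2 * (CI + 1) * sigmaE n E (W.cube Q₀)) + sigmaE n E (W.cube Q₀)) :=
          add_le_add hinit (add_le_add (hinside.trans (by gcongr; exact ih fun Q hQ => hG hQ))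
            houtside)
      _ = 2 * (CI + 1) * sigmaE n E (W.cube Q₀) := by
          rw [← mul_assoc, ← mul_assoc, ENNReal.inv_mul_cancel two_ne_zero ENNReal.ofNat_ne_top,
            one_mul]
          ring

theorem exists_princFam_of_subset_princ {F : Finset W.ι} (hF : ∀ P ∈ F, P ∈ princ n E W u I) :
    ∃ k, ∀ P ∈ F, P ∈ princFam n E W u I k :=
  princFam_mono.directed_le.exists_mem_subset_of_finset_subset_biUnion hF

end PrincipalCubes

theorem principal_cubes_carleson_general (n : ℕ) (E : Set (Euc (n + 1))) (W : WhitneySetup n E)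
    (CI : ℝ≥0∞) (hCI : CI ≠ ⊤) :
    ∃ K : ℝ≥0∞, K ≠ ⊤ ∧
      ∀ u : Euc (n + 1) → ℝ, HarmonicOnSet n u Eᶜ →
        ∀ I : Set W.ι, Exhausting n E W I →
          (∀ Q₀ : W.ι,
            ∑' Q : {Q : W.ι // Q ∈ I ∧ W.cube Q ⊆ W.cube Q₀}, sigmaE n E (W.cube Q.1)
              ≤ CI * sigmaE n E (W.cube Q₀)) →
          ∀ Q₀ : W.ι,
            ∑' P : {P : W.ι // P ∈ princ n E W u I ∧ W.cube P ⊆ W.cube Q₀},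
                sigmaE n E (W.cube P.1)
              ≤ K * sigmaE n E (W.cube Q₀) := by
  refine ⟨2 * (CI + 1), by finiteness, fun u _ I _ hpack Q₀ => ?_⟩
  have hI := (ENNReal.tsum_subtype_le_iff (f := fun Q => sigmaE n E (W.cube Q))).mp (hpack Q₀)
  refine (ENNReal.tsum_subtype_le_iff (f := fun P => sigmaE n E (W.cube P))).mpr fun F hF => ?_
  obtain ⟨k, hk⟩ := exists_princFam_of_subset_princ fun P hP => (hF P hP).1
  exact sum_measure_princFam_le hI k fun P hP => ⟨hk P hP, (hF P hP).2⟩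

/-- Let `E ⊆ ℝ^{n+1}` be `n`-ADR, `u` harmonic on `Ω := ℝ^{n+1} \ E`, and
let `𝒫 ⊆ 𝔻(E)` be the collection of principal (stopping) cubes built from an exhausting
increasing sequence `ℐ` and the stopping condition `M_𝔻(N_*u)(Q') > 2 M_𝔻(N_*u)(Q)`. Then
`𝒫` satisfies a Carleson packing condition `Σ_{P ∈ 𝒫, P ⊆ Q₀} σ(P) ≲ σ(Q₀)`, with implicit
constant depending only on the structural constants and the Carleson constant of `ℐ`. -/
theorem principal_cubes_carleson (n : ℕ) (E : Set (Euc (n + 1))) (CA : ℝ)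
    (hADR : IsADR n E CA) (W : WhitneySetup n E) (CI : ℝ≥0∞) (hCI : CI ≠ ⊤) :
    ∃ K : ℝ≥0∞, K ≠ ⊤ ∧
      ∀ u : Euc (n + 1) → ℝ, HarmonicOnSet n u Eᶜ →
        ∀ I : Set W.ι, Exhausting n E W I →
          (∀ Q₀ : W.ι,
            ∑' Q : {Q : W.ι // Q ∈ I ∧ W.cube Q ⊆ W.cube Q₀}, sigmaE n E (W.cube Q.1)
              ≤ CI * sigmaE n E (W.cube Q₀)) →
          ∀ Q₀ : W.ι,
            ∑' P : {P : W.ι // P ∈ princ n E W u I ∧ W.cube P ⊆ W.cube Q₀},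
                sigmaE n E (W.cube P.1)
              ≤ K * sigmaE n E (W.cube Q₀) :=
  principal_cubes_carleson_general n E W CI hCI
end

section
/- Discrete Carleson embedding theorem: Let μ be a locally finite doubling Borel measure on a (quasi)metric space X with μ(B(x,r)) > 0 for every x ∈ X and r > 0, and let 𝔻 be a dyadic system in X. Let f ≥ 0 be locally integrable. If 𝒜 ⊂ 𝔻 satisfies a Carleson packing condition with constant Λ ≥ 1, i.e. Σ_{Q∈𝒜,Q⊆Q₀} μ(Q) ≤ Λμ(Q₀) for every Q₀ ∈ 𝔻, then for every Q₀ ∈ 𝔻, Σ_{Q∈𝒜, Q⊆Q₀} ∫_Q f dμ ≤ Λ ∫_{Q₀} M_𝔻f dμ, where M_𝔻f(x) := sup_{Q∈𝔻, Q∋x} ⨍_Q f dμ is the dyadic maximal function. -/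
open MeasureTheory Metric Set
open scoped ENNReal NNReal

attribute [local instance] Classical.propDecidable

/-! On a finite subfamily of `𝒜`, the maximal cubes are pairwise disjoint, so the packing
condition applied to each of them gives `∑_{Q ∈ 𝒜'} μ(Q) ≤ Λ μ(⋃ 𝒜')`. Writing
`∫_Q f = μ(Q) ⨍_Q f` and applying this to the level families `{Q : ⨍_Q f > t}`, the layer cake
formula integrated in `t` gives `∑_Q μ(Q) ⨍_Q f ≤ Λ ∫_{Q₀} sup_Q (⨍_Q f) 1_Q ≤ Λ ∫_{Q₀} M_𝔻 f`. -/

section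

variable {α : Type*} [MeasurableSpace α] {μ : Measure α}

theorem setLIntegral_Ioi_indicator_ofReal_lt (c : ℝ≥0∞) :
    ∫⁻ t in Ioi (0 : ℝ), {t : ℝ | ENNReal.ofReal t < c}.indicator 1 t = c := by
  have hmeas : MeasurableSet {t : ℝ | ENNReal.ofReal t < c} :=
    measurableSet_lt ENNReal.measurable_ofReal measurable_const
  rw [lintegral_indicator_one hmeas, Measure.restrict_apply hmeas]
  rcases eq_or_ne c ⊤ with rfl | hc
  · simp
  · have hIoo : {t : ℝ | ENNReal.ofReal t < c} ∩ Ioi 0 = Ioo 0 c.toReal := by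
      ext t
      simp only [mem_inter_iff, mem_ofPred_eq, mem_Ioi, mem_Ioo]
      constructor
      · rintro ⟨ht, h0⟩
        exact ⟨h0, (ENNReal.ofReal_lt_iff_lt_toReal h0.le hc).1 ht⟩
      · rintro ⟨h0, ht⟩
        exact ⟨(ENNReal.ofReal_lt_iff_lt_toReal h0.le hc).2 ht, h0⟩
    rw [hIoo, Real.volume_Ioo, sub_zero, ENNReal.ofReal_toReal hc]

theorem lintegral_eq_setLIntegral_Ioi_measure_ofReal_lt [SFinite μ] {F : α → ℝ≥0∞}
    (hF : Measurable F) :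
    ∫⁻ x, F x ∂μ = ∫⁻ t in Ioi (0 : ℝ), μ {x | ENNReal.ofReal t < F x} := by
  have hmeas : Measurable fun p : α × ℝ =>
      {t : ℝ | ENNReal.ofReal t < F p.1}.indicator (1 : ℝ → ℝ≥0∞) p.2 :=
    measurable_const.indicator <|
      measurableSet_lt (ENNReal.measurable_ofReal.comp measurable_snd) (hF.comp measurable_fst)
  calc ∫⁻ x, F x ∂μ
      = ∫⁻ x, (∫⁻ t in Ioi (0 : ℝ), {t : ℝ | ENNReal.ofReal t < F x}.indicator 1 t) ∂μ := by
        simp only [setLIntegral_Ioi_indicator_ofReal_lt]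
    _ = ∫⁻ t in Ioi (0 : ℝ), (∫⁻ x, {t : ℝ | ENNReal.ofReal t < F x}.indicator 1 t ∂μ) :=
        lintegral_lintegral_swap hmeas.aemeasurable
    _ = ∫⁻ t in Ioi (0 : ℝ), μ {x | ENNReal.ofReal t < F x} := by
        refine lintegral_congr fun t => ?_
        rw [← lintegral_indicator_one (measurableSet_lt measurable_const hF)]
        rfl

theorem sum_measure_mul_le_lintegral_iSup_indicator [SFinite μ] {ι : Type*} {E : ι → Set α}
    (hE : ∀ i, MeasurableSet (E i)) {s : Finset ι} {C : ℝ≥0∞}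
    (hpack : ∀ t ⊆ s, ∑ i ∈ t, μ (E i) ≤ C * μ (⋃ i ∈ t, E i)) (b : ι → ℝ≥0∞) :
    ∑ i ∈ s, μ (E i) * b i ≤ C * ∫⁻ x, ⨆ i ∈ s, (E i).indicator (fun _ => b i) x ∂μ := by
  set F : α → ℝ≥0∞ := fun x => ⨆ i ∈ s, (E i).indicator (fun _ => b i) x
  have hF : Measurable F :=
    Measurable.biSup _ s.countable_toSet fun i _ => measurable_const.indicator (hE i)
  have hlevel : ∀ t : ℝ,
      {x | ENNReal.ofReal t < F x} = ⋃ i ∈ s.filter (ENNReal.ofReal t < b ·), E i := by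
    intro t
    ext x
    simp only [F, mem_ofPred_eq, lt_iSup_iff, Set.indicator_apply, mem_iUnion,
      Finset.mem_filter, exists_prop]
    constructor
    · rintro ⟨i, hi, hlt⟩
      split_ifs at hlt with hx
      exacts [⟨i, ⟨hi, hlt⟩, hx⟩, absurd hlt not_lt_zero]
    · rintro ⟨i, ⟨hi, hlt⟩, hx⟩
      exact ⟨i, hi, by rwa [if_pos hx]⟩
  have hind : ∀ i, Measurable ({t : ℝ | ENNReal.ofReal t < b i}.indicator (1 : ℝ → ℝ≥0∞)) :=
    fun i => measurable_const.indicator <|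
      measurableSet_lt ENNReal.measurable_ofReal measurable_const
  have hanti : Antitone fun t : ℝ => μ {x | ENNReal.ofReal t < F x} := fun t t' htt' =>
    measure_mono fun x hx => (ENNReal.ofReal_le_ofReal htt').trans_lt hx
  calc ∑ i ∈ s, μ (E i) * b i
      = ∑ i ∈ s,
          ∫⁻ t in Ioi (0 : ℝ), μ (E i) * {t : ℝ | ENNReal.ofReal t < b i}.indicator 1 t := by
        refine Finset.sum_congr rfl fun i _ => ?_
        rw [lintegral_const_mul _ (hind i), setLIntegral_Ioi_indicator_ofReal_lt]
    _ = ∫⁻ t in Ioi (0 : ℝ), ∑ i ∈ s.filter (ENNReal.ofReal t < b ·), μ (E i) := by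
        rw [← lintegral_finsetSum _ fun i _ => (hind i).const_mul _]
        refine lintegral_congr fun t => ?_
        simp [Finset.sum_filter, Set.indicator_apply]
    _ ≤ ∫⁻ t in Ioi (0 : ℝ), C * μ {x | ENNReal.ofReal t < F x} := by
        refine lintegral_mono fun t => ?_
        rw [hlevel]
        exact hpack _ (Finset.filter_subset _ _)
    _ = C * ∫⁻ x, F x ∂μ := by
        rw [lintegral_const_mul _ hanti.measurable,
          lintegral_eq_setLIntegral_Ioi_measure_ofReal_lt hF]

theorem sum_le_mul_measure_biUnion_of_nested {ι : Type*} {E : ι → Set α}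
    (hE : ∀ i, MeasurableSet (E i))
    (hnest : ∀ i j, E i ⊆ E j ∨ E j ⊆ E i ∨ Disjoint (E i) (E j))
    (t : Finset ι) (w : ι → ℝ≥0∞) {C : ℝ≥0∞}
    (hw : ∀ j ∈ t, ∑ i ∈ t with E i ⊆ E j, w i ≤ C * μ (E j)) :
    ∑ i ∈ t, w i ≤ C * μ (⋃ i ∈ t, E i) := by
  set M := (t.image E).filter (Maximal (· ∈ t.image E))
  have hcover : ∀ i ∈ t, ∃ U ∈ M, E i ⊆ U := fun i hi => by
    obtain ⟨U, hiU, hU⟩ := (t.image E).exists_le_maximal (Finset.mem_image_of_mem E hi)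
    exact ⟨U, Finset.mem_filter.2 ⟨hU.prop, hU⟩, hiU⟩
  have hM : ∀ U ∈ M, ∃ j ∈ t, E j = U := fun U hU =>
    Finset.mem_image.1 (Finset.mem_filter.1 hU).1
  have hdisj : (M : Set (Set α)).PairwiseDisjoint fun U => U := by
    intro U hU V hV hUV
    obtain ⟨j, -, rfl⟩ := hM U hU
    obtain ⟨k, -, rfl⟩ := hM V hV
    have hjmax := (Finset.mem_filter.1 hU).2
    have hkmax := (Finset.mem_filter.1 hV).2
    rcases hnest j k with h | h | h
    · exact absurd (hjmax.eq_of_le hkmax.prop h) hUV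
    · exact absurd (hkmax.eq_of_le hjmax.prop h).symm hUV
    · exact h
  calc ∑ i ∈ t, w i
      ≤ ∑ i ∈ t, ∑ U ∈ M with E i ⊆ U, w i := Finset.sum_le_sum fun i hi => by
        obtain ⟨U, hU, hiU⟩ := hcover i hi
        exact Finset.single_le_sum (f := fun _ => w i) (fun _ _ => zero_le)
          (Finset.mem_filter.2 ⟨hU, hiU⟩)
    _ = ∑ U ∈ M, ∑ i ∈ t with E i ⊆ U, w i := by
        simp only [Finset.sum_filter]
        exact Finset.sum_comm
    _ ≤ ∑ U ∈ M, C * μ U := Finset.sum_le_sum fun U hU => by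
        obtain ⟨j, hj, rfl⟩ := hM U hU
        exact hw j hj
    _ = C * μ (⋃ U ∈ M, U) := by
        rw [measure_biUnion_finset hdisj fun U hU => ?_, Finset.mul_sum]
        obtain ⟨j, -, rfl⟩ := hM U hU
        exact hE j
    _ ≤ C * μ (⋃ i ∈ t, E i) := by
        gcongr
        refine iUnion₂_subset fun U hU => ?_
        obtain ⟨j, hj, rfl⟩ := hM U hU
        exact subset_biUnion_of_mem (u := E) hj

end

theorem measure_ball_lt_top_of_doubling {X : Type*} [PseudoMetricSpace X] [MeasurableSpace X]
    {μ : Measure X} [IsLocallyFiniteMeasure μ] {Cd : ℝ≥0∞} (hCd : Cd ≠ ⊤)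
    (hdoub : ∀ (x : X) (r : ℝ), μ (ball x (2 * r)) ≤ Cd * μ (ball x r)) (x : X) (r : ℝ) :
    μ (ball x r) < ⊤ := by
  obtain ⟨ε, hε, hεfin⟩ : ∃ ε > 0, μ (ball x ε) < ⊤ := by
    obtain ⟨V, hV, hVfin⟩ := μ.finiteAt_nhds x
    obtain ⟨ε, hε, hεV⟩ := Metric.mem_nhds_iff.1 hV
    exact ⟨ε, hε, (measure_mono hεV).trans_lt hVfin⟩
  have hgrow : ∀ m : ℕ, μ (ball x (2 ^ m * ε)) < ⊤ := by
    intro m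
    induction m with
    | zero => simpa using hεfin
    | succ m ih =>
      rw [pow_succ', mul_assoc]
      exact (hdoub x _).trans_lt (ENNReal.mul_lt_top hCd.lt_top ih)
  obtain ⟨m, hm⟩ := pow_unbounded_of_one_lt (r / ε) one_lt_two
  exact (measure_mono (ball_subset_ball ((div_lt_iff₀ hε).1 hm).le)).trans_lt (hgrow m)

namespace MetricDyadic

variable {X : Type} [PseudoMetricSpace X] [MeasurableSpace X] {μ : Measure X}
  (D : MetricDyadic X)

theorem sum_measure_cube_le_of_carleson {A : Set D.ι} {C : ℝ≥0∞}
    (hA : ∀ R, ∑' Q : {Q : D.ι // Q ∈ A ∧ D.cube Q ⊆ D.cube R}, μ (D.cube Q.1) ≤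
      C * μ (D.cube R))
    {t : Finset D.ι} (ht : ∀ Q ∈ t, Q ∈ A) :
    ∑ Q ∈ t, μ (D.cube Q) ≤ C * μ (⋃ Q ∈ t, D.cube Q) := by
  refine sum_le_mul_measure_biUnion_of_nested D.cube_meas D.nested t _ fun R _ => ?_
  calc ∑ Q ∈ t with D.cube Q ⊆ D.cube R, μ (D.cube Q)
      = ∑ Q ∈ (t.filter (D.cube · ⊆ D.cube R)).subtype (fun Q => Q ∈ A ∧ D.cube Q ⊆ D.cube R),
          μ (D.cube Q.1) :=
        (Finset.sum_subtype_of_mem _ fun Q hQ =>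
          ⟨ht Q (Finset.mem_filter.1 hQ).1, (Finset.mem_filter.1 hQ).2⟩).symm
    _ ≤ _ := ENNReal.sum_le_tsum _
    _ ≤ C * μ (D.cube R) := hA R

theorem measure_cube_lt_top [IsLocallyFiniteMeasure μ] {Cd : ℝ≥0∞} (hCd : Cd ≠ ⊤)
    (hdoub : ∀ (x : X) (r : ℝ), μ (ball x (2 * r)) ≤ Cd * μ (ball x r)) (Q : D.ι) :
    μ (D.cube Q) < ⊤ :=
  (measure_mono (D.sub_ball Q)).trans_lt (measure_ball_lt_top_of_doubling hCd hdoub _ _)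

theorem setLAverage_le_mDyad (f : X → ℝ) {Q : D.ι} {x : X} (hx : x ∈ D.cube Q) :
    ⨍⁻ y in D.cube Q, ENNReal.ofReal (f y) ∂μ ≤ mDyad D μ f x := by
  rw [setLAverage_eq, ENNReal.div_eq_inv_mul]
  exact le_iSup₂ (f := fun Q (_ : x ∈ D.cube Q) =>
    (μ (D.cube Q))⁻¹ * ∫⁻ y in D.cube Q, ENNReal.ofReal (f y) ∂μ) Q hx

end MetricDyadic

theorem discrete_carleson_embedding_general {X : Type} [MetricSpace X] [MeasurableSpace X]
    (μ : Measure X) (hfin : IsLocallyFiniteMeasure μ)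
    (hdoub : ∃ Cd : ℝ≥0∞, Cd ≠ ⊤ ∧ ∀ (x : X) (r : ℝ), μ (ball x (2 * r)) ≤ Cd * μ (ball x r))
    (D : MetricDyadic X) (f : X → ℝ)
    (A : Set D.ι) (Λ : ℝ)
    (hA : ∀ Q₀ : D.ι,
      ∑' Q : {Q : D.ι // Q ∈ A ∧ D.cube Q ⊆ D.cube Q₀}, μ (D.cube Q.1) ≤
        ENNReal.ofReal Λ * μ (D.cube Q₀)) :
    ∀ Q₀ : D.ι,
      ∑' Q : {Q : D.ι // Q ∈ A ∧ D.cube Q ⊆ D.cube Q₀},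
          ∫⁻ x in D.cube Q.1, ENNReal.ofReal (f x) ∂μ ≤
        ENNReal.ofReal Λ * ∫⁻ x in D.cube Q₀, mDyad D μ f x ∂μ := by
  intro Q₀
  obtain ⟨Cd, hCd, hdoub⟩ := hdoub
  have hcube := D.measure_cube_lt_top (μ := μ) hCd hdoub
  -- `μ` need not be s-finite; its restriction to `Q₀` is finite, which the layer cake needs.
  have : IsFiniteMeasure (μ.restrict (D.cube Q₀)) := isFiniteMeasure_restrict.2 (hcube Q₀).ne
  set avg := fun Q => ⨍⁻ y in D.cube Q, ENNReal.ofReal (f y) ∂μ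
  rw [ENNReal.tsum_eq_iSup_sum]
  refine iSup_le fun s => ?_
  set s' := s.map (Function.Embedding.subtype _)
  have hs' : ∀ Q ∈ s', Q ∈ A ∧ D.cube Q ⊆ D.cube Q₀ := by
    simp only [s', Finset.mem_map, Function.Embedding.coe_subtype]
    rintro _ ⟨Q, -, rfl⟩
    exact Q.2
  calc ∑ Q ∈ s, ∫⁻ x in D.cube Q.1, ENNReal.ofReal (f x) ∂μ
      = ∑ Q ∈ s', μ.restrict (D.cube Q₀) (D.cube Q) * avg Q := by
        rw [Finset.sum_map]
        refine Finset.sum_congr rfl fun Q _ => ?_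
        rw [Function.Embedding.coe_subtype, Measure.restrict_eq_self _ Q.2.2,
          measure_mul_setLAverage _ (hcube Q).ne]
    _ ≤ ENNReal.ofReal Λ *
          ∫⁻ x in D.cube Q₀, ⨆ Q ∈ s', (D.cube Q).indicator (fun _ => avg Q) x ∂μ := by
        refine sum_measure_mul_le_lintegral_iSup_indicator D.cube_meas (fun t ht => ?_) avg
        rw [Finset.sum_congr rfl fun Q hQ => Measure.restrict_eq_self _ (hs' Q (ht hQ)).2,
          Measure.restrict_eq_self _ (iUnion₂_subset fun Q hQ => (hs' Q (ht hQ)).2)]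
        exact D.sum_measure_cube_le_of_carleson hA fun Q hQ => (hs' Q (ht hQ)).1
    _ ≤ ENNReal.ofReal Λ * ∫⁻ x in D.cube Q₀, mDyad D μ f x ∂μ := by
        gcongr with x
        exact iSup₂_le fun Q _ =>
          Set.indicator_apply_le' (D.setLAverage_le_mDyad f) fun _ => zero_le

/-- **Discrete Carleson embedding theorem.** Let `μ` be a locally finite
doubling Borel measure on a metric space `X` with `μ(B(x,r)) > 0` for all `x ∈ X`, `r > 0`,
and let `𝔻` be a dyadic system in `X`. Let `f ≥ 0` be locally integrable. If `𝒜 ⊆ 𝔻`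
satisfies a Carleson packing condition with constant `Λ ≥ 1`, then for every `Q₀ ∈ 𝔻`,
`Σ_{Q ∈ 𝒜, Q ⊆ Q₀} ∫_Q f dμ ≤ Λ ∫_{Q₀} M_𝔻 f dμ`. -/
theorem discrete_carleson_embedding {X : Type} [MetricSpace X] [MeasurableSpace X]
    [BorelSpace X] (μ : Measure X) (hfin : IsLocallyFiniteMeasure μ)
    (hdoub : ∃ Cd : ℝ≥0∞, Cd ≠ ⊤ ∧ ∀ (x : X) (r : ℝ), μ (ball x (2 * r)) ≤ Cd * μ (ball x r))
    (hpos : ∀ (x : X) (r : ℝ), 0 < r → 0 < μ (ball x r))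
    (D : MetricDyadic X) (f : X → ℝ) (hf0 : ∀ x, 0 ≤ f x) (hfi : LocallyIntegrable f μ)
    (A : Set D.ι) (Λ : ℝ) (hΛ : 1 ≤ Λ)
    (hA : ∀ Q₀ : D.ι,
      ∑' Q : {Q : D.ι // Q ∈ A ∧ D.cube Q ⊆ D.cube Q₀}, μ (D.cube Q.1) ≤
        ENNReal.ofReal Λ * μ (D.cube Q₀)) :
    ∀ Q₀ : D.ι,
      ∑' Q : {Q : D.ι // Q ∈ A ∧ D.cube Q ⊆ D.cube Q₀},
          ∫⁻ x in D.cube Q.1, ENNReal.ofReal (f x) ∂μ ≤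
        ENNReal.ofReal Λ * ∫⁻ x in D.cube Q₀, mDyad D μ f x ∂μ :=
  discrete_carleson_embedding_general μ hfin hdoub D f A Λ hA
end
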